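/- Let G be a simple graph on a finite vertex type V, let φ', φ : Sym2 V → Fin K be two classifications of edges such that φ'(e) ≤ φ(e) for every edge e of G, let s, g be vertices, and suppose the set Π(s,g) of paths from s to g is nonempty. If π' ∈ Π(s,g) minimizes θ_{φ'} in the colex order over Π(s,g) and π ∈ Π(s,g) minimizes θ_φ in the colex order over Π(s,g), then θ_{φ'}(π') ≤_colex θ_φ(π). In other words, the optimal class-count value is monotone in the classification: a planner whose classification is pointwise at most as bad obtains a path value that is at most as bad. -/

import Mathlib

open scoped NNReal

/-- The colexicographic strict order on `Fin K → ℕ`. -/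
def ColexLt {K : ℕ} (a b : Fin K → ℕ) : Prop :=
  ∃ k, a k < b k ∧ ∀ j, k < j → a j = b j

/-- The colexicographic order: `a ≤_colex b` iff `a <_colex b` or `a = b`. -/
def ColexLe {K : ℕ} (a b : Fin K → ℕ) : Prop :=
  ColexLt a b ∨ a = b

/-- The class-count vector of a walk: `theta G φ w k` is the number of edges of `w`
(with multiplicity) whose class under `φ` is `k`. -/
def theta {V : Type*} {K : ℕ} (G : SimpleGraph V) (φ : Sym2 V → Fin K)
    {s g : V} (w : G.Walk s g) : Fin K → ℕ :=
  fun k => w.edges.countP (fun e => decide (φ e = k))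

/-- The total weight of a walk: the sum of `c` over its edges (with multiplicity). -/
def weight {V : Type*} (G : SimpleGraph V) (c : Sym2 V → ℝ≥0)
    {s g : V} (w : G.Walk s g) : ℝ≥0 :=
  (w.edges.map c).sum

/-- The largest class `k` with `theta G φ w k > 0`, for a walk with at least one edge. -/
def maxClass {V : Type*} {K : ℕ} (G : SimpleGraph V) (φ : Sym2 V → Fin K)
    {s g : V} (w : G.Walk s g) (hw : w.edges ≠ []) : Fin K :=
  (Finset.univ.filter fun k => 0 < theta G φ w k).max' (by
    obtain ⟨e, he⟩ := List.exists_mem_of_ne_nil w.edges hw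
    refine ⟨φ e, ?_⟩
    simp only [Finset.mem_filter, Finset.mem_univ, true_and, theta]
    exact (Finset.mem_filter_univ _).mpr (List.countP_pos_iff.mpr ⟨e, he, by simp⟩))

/-- A walk between distinct vertices has at least one edge. -/
theorem edges_ne_nil_of_ne {V : Type*} {G : SimpleGraph V} {s g : V}
    (h : s ≠ g) (w : G.Walk s g) : w.edges ≠ [] := by
  cases w with
  | nil => exact absurd rfl h
  | cons h' p => simp

/-- Lexicographic order on pairs `(maxClass, count)`. -/
def PairLe {K : ℕ} (p q : Fin K × ℕ) : Prop :=
  p.1 < q.1 ∨ (p.1 = q.1 ∧ p.2 ≤ q.2)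

/-- Lexicographic order on keys `(class-count vector, weight)`:
first the colex order on the vectors, then the usual order on weights. -/
def KeyLe {K : ℕ} (p q : (Fin K → ℕ) × ℝ≥0) : Prop :=
  ColexLt p.1 q.1 ∨ (p.1 = q.1 ∧ p.2 ≤ q.2)

/-
Lowering the class of every edge can only lower a class-count vector in the colex order: each
edge moves one unit of mass from its class to a class at most as large, and colex comparison is
compatible with addition. Hence θ_{φ'}(π') ≤ θ_{φ'}(π) ≤ θ_φ(π), the first step by optimality of π'.
-/

namespace ColexLt

variable {K : ℕ} {a b c : Fin K → ℕ}

theorem trans (hab : ColexLt a b) (hbc : ColexLt b c) : ColexLt a c := by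
  obtain ⟨k, hk, hab⟩ := hab
  obtain ⟨l, hl, hbc⟩ := hbc
  rcases lt_trichotomy k l with hkl | rfl | hlk
  · exact ⟨l, hab l hkl ▸ hl, fun j hj => (hab j (hkl.trans hj)).trans (hbc j hj)⟩
  · exact ⟨k, hk.trans hl, fun j hj => (hab j hj).trans (hbc j hj)⟩
  · exact ⟨k, hbc k hlk ▸ hk, fun j hj => (hab j hj).trans (hbc j (hlk.trans hj))⟩

theorem add_right (hab : ColexLt a b) (c : Fin K → ℕ) : ColexLt (a + c) (b + c) := by
  obtain ⟨k, hk, hab⟩ := hab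
  exact ⟨k, by simpa using hk, fun j hj => by simp [hab j hj]⟩

end ColexLt

namespace ColexLe

variable {K : ℕ} {a b c d : Fin K → ℕ}

theorem trans (hab : ColexLe a b) (hbc : ColexLe b c) : ColexLe a c := by
  rcases hab with hab | rfl
  · rcases hbc with hbc | rfl
    · exact Or.inl (hab.trans hbc)
    · exact Or.inl hab
  · exact hbc

theorem add_right (hab : ColexLe a b) (c : Fin K → ℕ) : ColexLe (a + c) (b + c) := by
  rcases hab with hab | rfl
  · exact Or.inl (hab.add_right c)
  · exact Or.inr rfl

theorem add (hab : ColexLe a b) (hcd : ColexLe c d) : ColexLe (a + c) (b + d) :=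
  (hab.add_right c).trans (by simpa only [add_comm b] using hcd.add_right b)

end ColexLe

theorem colexLe_single_one {K : ℕ} {i j : Fin K} (hij : i ≤ j) :
    ColexLe (Pi.single i 1) (Pi.single j 1) := by
  rcases hij.lt_or_eq with hij | rfl
  · refine Or.inl ⟨j, by simp [hij.ne], fun m hm => ?_⟩
    simp [hm.ne', (hij.trans hm).ne']
  · exact Or.inr rfl

/-- `theta G φ w` is definitionally `classCount φ w.edges`. -/
def classCount {α : Type*} {K : ℕ} (φ : α → Fin K) (l : List α) : Fin K → ℕ :=
  fun k => l.countP (fun e => decide (φ e = k))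

theorem classCount_cons {α : Type*} {K : ℕ} (φ : α → Fin K) (a : α) (l : List α) :
    classCount φ (a :: l) = classCount φ l + Pi.single (φ a) 1 := by
  funext k
  simp [classCount, List.countP_cons, Pi.single_apply, eq_comm]

theorem classCount_colexLe_of_le {α : Type*} {K : ℕ} {φ' φ : α → Fin K} {l : List α}
    (h : ∀ e ∈ l, φ' e ≤ φ e) : ColexLe (classCount φ' l) (classCount φ l) := by
  induction l with
  | nil => exact Or.inr rfl
  | cons a l ih =>
    rw [classCount_cons, classCount_cons]
    exact (ih fun e he => h e (List.mem_cons_of_mem a he)).add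
      (colexLe_single_one (h a List.mem_cons_self))

theorem theta_colexLe_of_le {V : Type*} {K : ℕ} {G : SimpleGraph V} {φ' φ : Sym2 V → Fin K}
    (h : ∀ e ∈ G.edgeSet, φ' e ≤ φ e) {s g : V} (w : G.Walk s g) :
    ColexLe (theta G φ' w) (theta G φ w) :=
  classCount_colexLe_of_le fun e he => h e (w.edges_subset_edgeSet he)

theorem optimal_value_mono_in_classification_general {V : Type*} {K : ℕ}
    (G : SimpleGraph V) (φ' φ : Sym2 V → Fin K)
    (h : ∀ e ∈ G.edgeSet, φ' e ≤ φ e) (s g : V)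
    (π' π : G.Walk s g) (hπ : π.IsPath)
    (hmin' : ∀ p : G.Walk s g, p.IsPath → ColexLe (theta G φ' π') (theta G φ' p)) :
    ColexLe (theta G φ' π') (theta G φ π) :=
  (hmin' π hπ).trans (theta_colexLe_of_le h π)

/-- Monotonicity of the optimal class-count value in the classification: if `φ'` is
pointwise at most `φ` on the edges of `G`, `π'` minimizes `theta` under `φ'` in the colex
order over the (nonempty) set of paths from `s` to `g`, and `π` minimizes `theta` under
`φ` over the same set, then `theta φ' π' ≤_colex theta φ π`. -/
theorem optimal_value_mono_in_classification {V : Type*} [Fintype V] {K : ℕ}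
    (G : SimpleGraph V) (φ' φ : Sym2 V → Fin K)
    (h : ∀ e ∈ G.edgeSet, φ' e ≤ φ e) (s g : V)
    (hne : ∃ p : G.Walk s g, p.IsPath)
    (π' π : G.Walk s g) (hπ' : π'.IsPath) (hπ : π.IsPath)
    (hmin' : ∀ p : G.Walk s g, p.IsPath → ColexLe (theta G φ' π') (theta G φ' p))
    (hmin : ∀ p : G.Walk s g, p.IsPath → ColexLe (theta G φ π) (theta G φ p)) :
    ColexLe (theta G φ' π') (theta G φ π) :=
  optimal_value_mono_in_classification_general G φ' φ h s g π' π hπ hmin'
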